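/- Let X be a compact Hausdorff space and 𝒜 a function algebra on X. Every maximal set of antisymmetry A of 𝒜 is an intersection of peak sets of 𝒜, i.e. there is a family (E_i) of peak sets of 𝒜 with A = ⋂_i E_i. -/

import Mathlib

variable {X : Type*} [TopologicalSpace X] [CompactSpace X] [T2Space X]

/-- A function algebra on a compact Hausdorff space `X`: a closed subalgebra of `C(X, ℂ)`
(it contains the constants, being a subalgebra) which separates the points of `X`. -/
def IsFunctionAlgebra (𝒜 : Subalgebra ℂ C(X, ℂ)) : Prop :=
  IsClosed (𝒜 : Set C(X, ℂ)) ∧ ∀ x y : X, x ≠ y → ∃ u ∈ 𝒜, u x ≠ u y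

/-- `S` is a set of antisymmetry of `𝒜` if every `u ∈ 𝒜` which is real valued on `S`
is constant on `S`. -/
def IsAntisymmetrySet (𝒜 : Subalgebra ℂ C(X, ℂ)) (S : Set X) : Prop :=
  ∀ u ∈ 𝒜, (∀ x ∈ S, (u x).im = 0) → ∀ x ∈ S, ∀ y ∈ S, u x = u y

/-- A maximal set of antisymmetry: a set of antisymmetry not properly contained in any
other set of antisymmetry. -/
def IsMaximalAntisymmetrySet (𝒜 : Subalgebra ℂ C(X, ℂ)) (S : Set X) : Prop :=
  IsAntisymmetrySet 𝒜 S ∧ ∀ S', IsAntisymmetrySet 𝒜 S' → S ⊆ S' → S' = S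

/-- A peak set of `𝒜`: a closed set `E` for which there is `u ∈ 𝒜` with `u = 1` on `E` and
`|u| < 1` off `E`. -/
def IsPeakSet (𝒜 : Subalgebra ℂ C(X, ℂ)) (E : Set X) : Prop :=
  IsClosed E ∧ ∃ u ∈ 𝒜, (∀ x ∈ E, u x = 1) ∧ ∀ x ∉ E, ‖u x‖ < 1

/-!
Among the intersections of peak sets containing `A`, Zorn's lemma gives a minimal one, `E`.
If `u ∈ 𝒜` is real on `E`, then `p = 1 - δ (u - u a)²` has `‖p‖ ≤ 1` on `E`, with `p = 1`
exactly where `u = u a`. By Bishop's lemma `p` agrees on `E` with some `w ∈ 𝒜` bounded by `1`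
everywhere, and `{w = 1}` is a peak set; so `E ∩ {p = 1}` is again an intersection of peak sets
containing `A`, and minimality makes `u` constant on `E`. Thus `E` is a set of antisymmetry
containing `A`, and `E = A` by maximality.
-/

open Set

section
omit [CompactSpace X] [T2Space X]

variable {𝒜 : Subalgebra ℂ C(X, ℂ)}

theorem norm_apply_le_one_of_peaks {E : Set X} {u : C(X, ℂ)} (hu₁ : ∀ x ∈ E, u x = 1)
    (hu : ∀ x ∉ E, ‖u x‖ < 1) (x : X) : ‖u x‖ ≤ 1 := by
  by_cases hx : x ∈ E
  · simp [hu₁ x hx]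
  · exact (hu x hx).le

theorem IsPeakSet.univ : IsPeakSet 𝒜 univ :=
  ⟨isClosed_univ, 1, one_mem _, fun _ _ ↦ rfl, fun x hx ↦ absurd (mem_univ x) hx⟩

theorem IsPeakSet.inter {E F : Set X} (hE : IsPeakSet 𝒜 E) (hF : IsPeakSet 𝒜 F) :
    IsPeakSet 𝒜 (E ∩ F) := by
  obtain ⟨hEc, u, hu𝒜, hu₁, hu⟩ := hE
  obtain ⟨hFc, v, hv𝒜, hv₁, hv⟩ := hF
  refine ⟨hEc.inter hFc, (2⁻¹ : ℂ) • (u + v), Subalgebra.smul_mem _ (add_mem hu𝒜 hv𝒜) _,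
    fun x hx ↦ ?_, fun x hx ↦ ?_⟩
  · simp only [ContinuousMap.smul_apply, ContinuousMap.add_apply, hu₁ x hx.1, hv₁ x hx.2]
    norm_num
  · have hsum : ‖u x‖ + ‖v x‖ < 2 := by
      have hu' := norm_apply_le_one_of_peaks hu₁ hu x
      have hv' := norm_apply_le_one_of_peaks hv₁ hv x
      rcases not_and_or.1 hx with hxE | hxF
      · linarith [hu x hxE]
      · linarith [hv x hxF]
    calc ‖((2⁻¹ : ℂ) • (u + v)) x‖ = 2⁻¹ * ‖u x + v x‖ := by simp
      _ ≤ 2⁻¹ * (‖u x‖ + ‖v x‖) := by gcongr; exact norm_add_le _ _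
      _ < 1 := by linarith

/-- `(1 + w) / 2` peaks on `{w = 1}` since the closed unit disc is strictly convex. -/
theorem isPeakSet_setOf_eq_one {w : C(X, ℂ)} (hw : w ∈ 𝒜) (hw₁ : ∀ x, ‖w x‖ ≤ 1) :
    IsPeakSet 𝒜 {x | w x = 1} := by
  refine ⟨isClosed_eq w.continuous continuous_const, (2⁻¹ : ℂ) • (1 + w),
    Subalgebra.smul_mem _ (add_mem (one_mem _) hw) _, fun x hx ↦ ?_, fun x hx ↦ ?_⟩
  · have hx : w x = 1 := hx
    simp only [ContinuousMap.smul_apply, ContinuousMap.add_apply, ContinuousMap.one_apply, hx]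
    norm_num
  · have := norm_combo_lt_of_ne (norm_one (α := ℂ)).le (hw₁ x) (Ne.symm hx)
      (by norm_num : (0 : ℝ) < 2⁻¹) (by norm_num : (0 : ℝ) < 2⁻¹) (by norm_num)
    simpa [Complex.real_smul, mul_add] using this

def IsGeneralizedPeakSet (𝒜 : Subalgebra ℂ C(X, ℂ)) (E : Set X) : Prop :=
  ∃ 𝒮 : Set (Set X), (∀ S ∈ 𝒮, IsPeakSet 𝒜 S) ∧ E = ⋂₀ 𝒮

theorem isGeneralizedPeakSet_iff {E : Set X} :
    IsGeneralizedPeakSet 𝒜 E ↔ ∀ x ∉ E, ∃ P, IsPeakSet 𝒜 P ∧ E ⊆ P ∧ x ∉ P := by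
  constructor
  · rintro ⟨𝒮, h𝒮, rfl⟩ x hx
    obtain ⟨S, hS, hxS⟩ := not_forall₂.1 (mem_sInter.not.1 hx)
    exact ⟨S, h𝒮 S hS, sInter_subset_of_mem hS, hxS⟩
  · intro h
    refine ⟨{P | IsPeakSet 𝒜 P ∧ E ⊆ P}, fun P hP ↦ hP.1,
      (subset_sInter fun P hP ↦ hP.2).antisymm fun x hx ↦ ?_⟩
    by_contra hxE
    obtain ⟨P, hP, hEP, hxP⟩ := h x hxE
    exact hxP (hx P ⟨hP, hEP⟩)

theorem IsGeneralizedPeakSet.sInter {𝒞 : Set (Set X)}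
    (h𝒞 : ∀ E ∈ 𝒞, IsGeneralizedPeakSet 𝒜 E) : IsGeneralizedPeakSet 𝒜 (⋂₀ 𝒞) := by
  refine isGeneralizedPeakSet_iff.2 fun x hx ↦ ?_
  obtain ⟨E, hE, hxE⟩ := not_forall₂.1 (mem_sInter.not.1 hx)
  obtain ⟨P, hP, hEP, hxP⟩ := isGeneralizedPeakSet_iff.1 (h𝒞 E hE) x hxE
  exact ⟨P, hP, (sInter_subset_of_mem hE).trans hEP, hxP⟩

theorem IsGeneralizedPeakSet.inter_isPeakSet {E P : Set X} (hE : IsGeneralizedPeakSet 𝒜 E)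
    (hP : IsPeakSet 𝒜 P) : IsGeneralizedPeakSet 𝒜 (E ∩ P) := by
  rw [← sInter_pair]
  refine IsGeneralizedPeakSet.sInter ?_
  rintro F (rfl | rfl)
  exacts [hE, ⟨{F}, by simpa using hP, (sInter_singleton F).symm⟩]

theorem exists_minimal_isGeneralizedPeakSet_superset (A : Set X) :
    ∃ E, Minimal (fun E ↦ IsGeneralizedPeakSet 𝒜 E ∧ A ⊆ E) E :=
  zorn_superset _ fun 𝒞 h𝒞 _ ↦ ⟨⋂₀ 𝒞,
    ⟨IsGeneralizedPeakSet.sInter fun _ hE ↦ (h𝒞 hE).1, subset_sInter fun _ hE ↦ (h𝒞 hE).2⟩,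
    fun _ ↦ sInter_subset_of_mem⟩

theorem IsMaximalAntisymmetrySet.nonempty [Nonempty X] {A : Set X}
    (hA : IsMaximalAntisymmetrySet 𝒜 A) : A.Nonempty := by
  obtain ⟨x⟩ := ‹Nonempty X›
  have hx : IsAntisymmetrySet 𝒜 {x} := by
    rintro u - - y rfl z rfl
    rfl
  rcases A.eq_empty_or_nonempty with rfl | hne
  · exact absurd (hA.2 {x} hx (empty_subset _)) (singleton_ne_empty x)
  · exact hne

end

theorem hasSum_half_pow_succ : HasSum (fun n : ℕ ↦ (1 / 2 : ℝ) ^ (n + 1)) 1 := by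
  have := hasSum_geometric_two.mul_left (1 / 2)
  rwa [show (1 / 2 : ℝ) * 2 = 1 by norm_num, funext fun n ↦ (pow_succ' (1 / 2 : ℝ) n).symm] at this

open Finset in
theorem tsum_half_pow_succ_mul_le_of_tail_le_half {a : ℕ → ℝ} {t : ℝ} (N : ℕ)
    (ha : ∀ n, 0 ≤ a n) (hat : ∀ n, a n ≤ t) (htail : ∀ n, N ≤ n → a n ≤ 1 / 2) :
    ∑' n, (1 / 2 : ℝ) ^ (n + 1) * a n ≤ (1 - (1 / 2) ^ N) * t + (1 / 2) ^ N / 2 := by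
  have hc := hasSum_half_pow_succ
  set q : ℝ := (1 / 2) ^ N
  have hsum : Summable fun n ↦ (1 / 2 : ℝ) ^ (n + 1) * a n :=
    (hc.summable.mul_right t).of_nonneg_of_le (fun n ↦ by have := ha n; positivity)
      fun n ↦ mul_le_mul_of_nonneg_left (hat n) (by positivity)
  have hshift (n : ℕ) : (1 / 2 : ℝ) ^ (n + N + 1) = q * (1 / 2) ^ (n + 1) := by
    rw [← pow_add]; ring_nf
  have hhead : ∑ n ∈ range N, (1 / 2 : ℝ) ^ (n + 1) = 1 - q := by
    have := hc.summable.sum_add_tsum_nat_add N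
    rw [tsum_congr hshift, tsum_mul_left, hc.tsum_eq] at this
    linarith
  rw [← hsum.sum_add_tsum_nat_add N]
  calc ∑ n ∈ range N, (1 / 2 : ℝ) ^ (n + 1) * a n + ∑' n, (1 / 2 : ℝ) ^ (n + N + 1) * a (n + N)
      ≤ ∑ n ∈ range N, (1 / 2 : ℝ) ^ (n + 1) * t + ∑' n, q * (1 / 2) ^ (n + 1) * (1 / 2) := by
        refine add_le_add (sum_le_sum fun n _ ↦ ?_) (Summable.tsum_le_tsum (fun n ↦ ?_)
          ((summable_nat_add_iff N).2 hsum) ((hc.summable.mul_left q).mul_right _))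
        · exact mul_le_mul_of_nonneg_left (hat n) (by positivity)
        · rw [hshift]
          exact mul_le_mul_of_nonneg_left (htail _ (by omega)) (by positivity)
    _ = (1 - q) * t + q / 2 := by
        rw [← sum_mul, hhead, tsum_mul_right, tsum_mul_left, hc.tsum_eq]; ring

theorem tsum_half_pow_succ_mul_le_one {a : ℕ → ℝ} {t : ℝ} (ha : ∀ n, 0 ≤ a n)
    (hat : ∀ n, a n ≤ t) (hsmall : ∀ n, 1 + (1 / 2) ^ (n + 2) ≤ t → a n ≤ 1 / 2) :
    ∑' n, (1 / 2 : ℝ) ^ (n + 1) * a n ≤ 1 := by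
  by_cases ht : t ≤ 1
  · calc ∑' n, (1 / 2 : ℝ) ^ (n + 1) * a n ≤ ∑' n, (1 / 2 : ℝ) ^ (n + 1) * t :=
          Summable.tsum_le_tsum (fun n ↦ mul_le_mul_of_nonneg_left (hat n) (by positivity))
            ((hasSum_half_pow_succ.summable.mul_right t).of_nonneg_of_le
              (fun n ↦ by have := ha n; positivity)
              fun n ↦ mul_le_mul_of_nonneg_left (hat n) (by positivity))
            (hasSum_half_pow_succ.summable.mul_right t)
      _ = t := by rw [tsum_mul_right, hasSum_half_pow_succ.tsum_eq, one_mul]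
      _ ≤ 1 := ht
  have hex : ∃ n, 1 + (1 / 2 : ℝ) ^ (n + 2) ≤ t := by
    obtain ⟨n, hn⟩ := exists_pow_lt_of_lt_one (sub_pos.2 (not_le.1 ht))
      (by norm_num : (1 / 2 : ℝ) < 1)
    have : (1 / 2 : ℝ) ^ (n + 2) ≤ (1 / 2) ^ n :=
      pow_le_pow_of_le_one (by norm_num) (by norm_num) (by omega)
    exact ⟨n, by linarith⟩
  classical
  set N := Nat.find hex
  have htail (n : ℕ) (hn : N ≤ n) : a n ≤ 1 / 2 := by
    have : (1 / 2 : ℝ) ^ (n + 2) ≤ (1 / 2) ^ (N + 2) :=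
      pow_le_pow_of_le_one (by norm_num) (by norm_num) (by omega)
    exact hsmall _ (by linarith [Nat.find_spec hex])
  refine (tsum_half_pow_succ_mul_le_of_tail_le_half N ha hat htail).trans ?_
  have hq : 0 < (1 / 2 : ℝ) ^ N := by positivity
  rcases eq_or_ne N 0 with hN | hN
  · simp only [hN, pow_zero, sub_self, zero_mul, zero_add]
    norm_num
  · have hhead : t ≤ 1 + (1 / 2) ^ N / 2 := by
      have := Nat.find_min hex (Nat.sub_one_lt hN)
      rw [show N - 1 + 2 = N + 1 by omega, pow_succ] at this
      linarith
    have hq1 : (1 / 2 : ℝ) ^ N ≤ 1 := pow_le_one₀ (by norm_num) (by norm_num)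
    nlinarith

section
omit [T2Space X]

variable {𝒜 : Subalgebra ℂ C(X, ℂ)}

theorem IsPeakSet.exists_norm_le_of_notMem {E U : Set X} (hE : IsPeakSet 𝒜 E) (hU : IsOpen U)
    (hEU : E ⊆ U) {δ : ℝ} (hδ : 0 < δ) :
    ∃ h ∈ 𝒜, (∀ x ∈ E, h x = 1) ∧ (∀ x, ‖h x‖ ≤ 1) ∧ ∀ x ∉ U, ‖h x‖ ≤ δ := by
  obtain ⟨-, u, hu𝒜, hu₁, hu⟩ := hE
  obtain ⟨r, hr, hur⟩ : ∃ r < 1, ∀ x ∉ U, ‖u x‖ ≤ r := by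
    rcases Uᶜ.eq_empty_or_nonempty with hUc | hUc
    · exact ⟨0, one_pos, fun x hx ↦ absurd (hUc ▸ hx : x ∈ (∅ : Set X)) (notMem_empty x)⟩
    · obtain ⟨z, hz, hzmax⟩ := hU.isClosed_compl.isCompact.exists_isMaxOn hUc
        (continuous_norm.comp u.continuous).continuousOn
      exact ⟨‖u z‖, hu z fun hzE ↦ hz (hEU hzE), fun x hx ↦ hzmax hx⟩
  obtain ⟨k, hk⟩ := exists_pow_lt_of_lt_one hδ hr
  refine ⟨u ^ k, pow_mem hu𝒜 k, fun x hx ↦ by simp [hu₁ x hx], fun x ↦ ?_, fun x hx ↦ ?_⟩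
  · simpa using pow_le_one₀ (norm_nonneg _) (norm_apply_le_one_of_peaks hu₁ hu x)
  · simp only [ContinuousMap.pow_apply, norm_pow]
    calc ‖u x‖ ^ k ≤ r ^ k := pow_le_pow_left₀ (norm_nonneg _) (hur x hx) k
      _ ≤ δ := hk.le

theorem IsGeneralizedPeakSet.exists_isPeakSet_subset {E U : Set X}
    (hE : IsGeneralizedPeakSet 𝒜 E) (hU : IsOpen U) (hEU : E ⊆ U) :
    ∃ P, IsPeakSet 𝒜 P ∧ E ⊆ P ∧ P ⊆ U := by
  let ι := {P : Set X // IsPeakSet 𝒜 P ∧ E ⊆ P}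
  have : Nonempty ι := ⟨⟨univ, IsPeakSet.univ, subset_univ E⟩⟩
  have hdir : Directed (· ⊇ ·) fun P : ι ↦ (P : Set X) := fun P Q ↦
    ⟨⟨P ∩ Q, P.2.1.inter Q.2.1, subset_inter P.2.2 Q.2.2⟩, inter_subset_left, inter_subset_right⟩
  have hdisj : Uᶜ ∩ ⋂ P : ι, (P : Set X) = ∅ := by
    refine eq_empty_iff_forall_notMem.2 fun x ⟨hxU, hx⟩ ↦ ?_
    obtain ⟨P, hP, hEP, hxP⟩ := isGeneralizedPeakSet_iff.1 hE x fun hxE ↦ hxU (hEU hxE)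
    exact hxP (mem_iInter.1 hx ⟨P, hP, hEP⟩)
  obtain ⟨P, hP⟩ := hU.isClosed_compl.isCompact.elim_directed_family_closed _
    (fun P ↦ P.2.1.1) hdisj hdir
  exact ⟨P, P.2.1, P.2.2, fun x hx ↦
    by_contra fun hxU ↦ eq_empty_iff_forall_notMem.1 hP x ⟨hxU, hx⟩⟩

theorem IsGeneralizedPeakSet.exists_norm_le_of_notMem {E U : Set X}
    (hE : IsGeneralizedPeakSet 𝒜 E) (hU : IsOpen U) (hEU : E ⊆ U) {δ : ℝ} (hδ : 0 < δ) :
    ∃ h ∈ 𝒜, (∀ x ∈ E, h x = 1) ∧ (∀ x, ‖h x‖ ≤ 1) ∧ ∀ x ∉ U, ‖h x‖ ≤ δ := by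
  obtain ⟨P, hP, hEP, hPU⟩ := hE.exists_isPeakSet_subset hU hEU
  obtain ⟨h, h𝒜, h₁, hle, hsmall⟩ := hP.exists_norm_le_of_notMem hU hPU hδ
  exact ⟨h, h𝒜, fun x hx ↦ h₁ x (hEP hx), hle, hsmall⟩

section Series

variable {f : ℕ → C(X, ℂ)} {C : ℝ}

theorem summable_half_pow_succ_smul (hf : ∀ n, ‖f n‖ ≤ C) :
    Summable fun n ↦ (((1 / 2 : ℝ) ^ (n + 1) : ℝ) : ℂ) • f n := by
  refine (hasSum_half_pow_succ.summable.mul_right C).of_norm_bounded fun n ↦ ?_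
  rw [norm_smul, Complex.norm_real, Real.norm_of_nonneg (by positivity)]
  gcongr
  exact hf n

theorem tsum_half_pow_succ_smul_apply_of_forall_eq (hf : ∀ n, ‖f n‖ ≤ C) {x : X} {z : ℂ}
    (hz : ∀ n, f n x = z) : (∑' n, (((1 / 2 : ℝ) ^ (n + 1) : ℝ) : ℂ) • f n) x = z := by
  simp only [← ContinuousMap.tsum_apply (summable_half_pow_succ_smul hf),
    ContinuousMap.smul_apply, hz, smul_eq_mul]
  rw [tsum_mul_right, ← Complex.ofReal_tsum, hasSum_half_pow_succ.tsum_eq, Complex.ofReal_one,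
    one_mul]

theorem norm_tsum_half_pow_succ_smul_apply_le (hf : ∀ n, ‖f n‖ ≤ C) (x : X) :
    ‖(∑' n, (((1 / 2 : ℝ) ^ (n + 1) : ℝ) : ℂ) • f n) x‖ ≤ ∑' n, (1 / 2) ^ (n + 1) * ‖f n x‖ := by
  have hnorm (n : ℕ) :
      ‖(((1 / 2 : ℝ) ^ (n + 1) : ℝ) : ℂ) * f n x‖ = (1 / 2) ^ (n + 1) * ‖f n x‖ := by
    rw [norm_mul, Complex.norm_real, Real.norm_of_nonneg (by positivity)]
  have hsum : Summable fun n ↦ ‖(((1 / 2 : ℝ) ^ (n + 1) : ℝ) : ℂ) * f n x‖ := by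
    refine (hasSum_half_pow_succ.summable.mul_right C).of_nonneg_of_le (fun n ↦ norm_nonneg _)
      fun n ↦ ?_
    rw [hnorm]
    gcongr
    exact ((f n).norm_coe_le_norm x).trans (hf n)
  simp only [← ContinuousMap.tsum_apply (summable_half_pow_succ_smul hf),
    ContinuousMap.smul_apply, smul_eq_mul]
  exact (norm_tsum_le_tsum_norm hsum).trans_eq (tsum_congr hnorm)

end Series

/-- Bishop's lemma. The witness is `∑ 2⁻ⁿ⁻¹ • g * hₙ`, where `hₙ = 1` on `E` and `‖hₙ‖` is
small wherever `‖g‖ ≥ 1 + 2⁻ⁿ⁻²`. -/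
theorem IsGeneralizedPeakSet.exists_eqOn_norm_le_one (h𝒜 : IsClosed (𝒜 : Set C(X, ℂ)))
    {E : Set X} (hE : IsGeneralizedPeakSet 𝒜 E) {g : C(X, ℂ)} (hg : g ∈ 𝒜)
    (hg₁ : ∀ x ∈ E, ‖g x‖ ≤ 1) : ∃ w ∈ 𝒜, EqOn w g E ∧ ∀ x, ‖w x‖ ≤ 1 := by
  set δ : ℝ := (2 * (‖g‖ + 1))⁻¹
  have hgδ : ‖g‖ * δ ≤ 1 / 2 := by
    rw [← div_eq_mul_inv, div_le_iff₀ (by positivity)]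
    linarith
  set U : ℕ → Set X := fun n ↦ {x | ‖g x‖ < 1 + (1 / 2) ^ (n + 2)}
  have hU (n : ℕ) : IsOpen (U n) := isOpen_lt (continuous_norm.comp g.continuous) continuous_const
  have hEU (n : ℕ) : E ⊆ U n := fun x hx ↦ by
    have : (0 : ℝ) < (1 / 2) ^ (n + 2) := by positivity
    exact lt_of_le_of_lt (hg₁ x hx) (by linarith)
  choose h h𝒜' h₁ hle hsmall using fun n ↦ hE.exists_norm_le_of_notMem (hU n) (hEU n)
    (by positivity : 0 < δ)
  have hgh (n : ℕ) (x : X) : ‖(g * h n) x‖ ≤ ‖g x‖ := by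
    rw [ContinuousMap.mul_apply, norm_mul]
    exact mul_le_of_le_one_right (norm_nonneg _) (hle n x)
  have hbdd (n : ℕ) : ‖g * h n‖ ≤ ‖g‖ :=
    (ContinuousMap.norm_le _ (norm_nonneg _)).2 fun x ↦ (hgh n x).trans (g.norm_coe_le_norm x)
  refine ⟨_, tsum_mem h𝒜 fun n ↦ Subalgebra.smul_mem _ (mul_mem hg (h𝒜' n)) _,
    fun x hx ↦ tsum_half_pow_succ_smul_apply_of_forall_eq hbdd fun n ↦ ?_,
    fun x ↦ (norm_tsum_half_pow_succ_smul_apply_le hbdd x).trans ?_⟩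
  · rw [ContinuousMap.mul_apply, h₁ n x hx, mul_one]
  refine tsum_half_pow_succ_mul_le_one (fun n ↦ norm_nonneg _) (hgh · x) fun n hn ↦ ?_
  have hxU : x ∉ U n := fun hxU ↦ (not_lt.2 hn) hxU
  calc ‖(g * h n) x‖ = ‖g x‖ * ‖h n x‖ := norm_mul _ _
    _ ≤ ‖g‖ * δ := mul_le_mul (g.norm_coe_le_norm x) (hsmall n x hxU) (norm_nonneg _)
        (norm_nonneg _)
    _ ≤ 1 / 2 := hgδ

theorem IsGeneralizedPeakSet.inter_setOf_eq_one (h𝒜 : IsClosed (𝒜 : Set C(X, ℂ))) {E : Set X}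
    (hE : IsGeneralizedPeakSet 𝒜 E) {g : C(X, ℂ)} (hg : g ∈ 𝒜) (hg₁ : ∀ x ∈ E, ‖g x‖ ≤ 1) :
    IsGeneralizedPeakSet 𝒜 (E ∩ {x | g x = 1}) := by
  obtain ⟨w, hw𝒜, hwg, hw₁⟩ := hE.exists_eqOn_norm_le_one h𝒜 hg hg₁
  have hEw : E ∩ {x | g x = 1} = E ∩ {x | w x = 1} := by
    ext x
    exact and_congr_right fun hx ↦ iff_of_eq (congrArg (· = 1) (hwg hx).symm)
  rw [hEw]
  exact hE.inter_isPeakSet (isPeakSet_setOf_eq_one hw𝒜 hw₁)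

theorem exists_norm_le_one_and_eq_one_iff_of_im_eq_zero {S : Set X} {u : C(X, ℂ)} (hu : u ∈ 𝒜)
    (hS : ∀ x ∈ S, (u x).im = 0) : ∃ p ∈ 𝒜, ∀ x ∈ S, ‖p x‖ ≤ 1 ∧ (p x = 1 ↔ u x = 0) := by
  set δ : ℝ := (‖u‖ ^ 2 + 1)⁻¹
  refine ⟨1 - (δ : ℂ) • u ^ 2, sub_mem (one_mem _) (Subalgebra.smul_mem _ (pow_mem hu 2) _),
    fun x hx ↦ ?_⟩
  obtain ⟨r, hr⟩ : ∃ r : ℝ, u x = r := ⟨(u x).re, Complex.ext (by simp) (by simp [hS x hx])⟩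
  have hr_le : r ^ 2 ≤ ‖u‖ ^ 2 := by
    have := u.norm_coe_le_norm x
    rw [hr, Complex.norm_real, Real.norm_eq_abs] at this
    simpa only [sq_abs] using pow_le_pow_left₀ (abs_nonneg r) this 2
  have hδr : δ * r ^ 2 < 1 := by
    rw [← div_eq_inv_mul, div_lt_one (by positivity)]
    linarith
  have hδr₀ : 0 ≤ δ * r ^ 2 := by positivity
  have hpx : (1 - (δ : ℂ) • u ^ 2 : C(X, ℂ)) x = ((1 - δ * r ^ 2 : ℝ) : ℂ) := by simp [hr]
  rw [hpx, Complex.norm_real, Real.norm_eq_abs, hr, Complex.ofReal_eq_one, Complex.ofReal_eq_zero,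
    abs_le]
  refine ⟨⟨by linarith, by linarith⟩, fun h ↦ ?_, fun h ↦ by simp [h]⟩
  simpa [(by positivity : δ ≠ 0)] using (sub_eq_self.1 h : δ * r ^ 2 = 0)

theorem isAntisymmetrySet_of_minimal_isGeneralizedPeakSet (h𝒜 : IsClosed (𝒜 : Set C(X, ℂ)))
    {A E : Set X} {a : X} (hA : IsAntisymmetrySet 𝒜 A) (ha : a ∈ A)
    (hE : Minimal (fun E ↦ IsGeneralizedPeakSet 𝒜 E ∧ A ⊆ E) E) : IsAntisymmetrySet 𝒜 E := by
  intro u hu hreal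
  obtain ⟨hEp, hAE⟩ := hE.prop
  obtain ⟨p, hp, hp₁⟩ := exists_norm_le_one_and_eq_one_iff_of_im_eq_zero (S := E)
    (sub_mem hu (Subalgebra.algebraMap_mem 𝒜 (u a)))
    fun x hx ↦ by simp [hreal x hx, hreal a (hAE ha)]
  have hp_eq (x : X) (hx : x ∈ E) : p x = 1 ↔ u x = u a := by
    simpa [sub_eq_zero] using (hp₁ x hx).2
  have hAp : A ⊆ E ∩ {x | p x = 1} := fun x hx ↦
    ⟨hAE hx, (hp_eq x (hAE hx)).2 (hA u hu (fun y hy ↦ hreal y (hAE hy)) x hx a ha)⟩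
  have hEp₁ : E ⊆ E ∩ {x | p x = 1} :=
    hE.2 ⟨hEp.inter_setOf_eq_one h𝒜 hp fun x hx ↦ (hp₁ x hx).1, hAp⟩ inter_subset_left
  intro x hx y hy
  rw [(hp_eq x hx).1 (hEp₁ hx).2, (hp_eq y hy).1 (hEp₁ hy).2]

end

/-- Every maximal set of antisymmetry of a function algebra is an intersection of peak sets. -/
theorem maximal_antisymmetrySet_eq_iInter_peakSets
    (𝒜 : Subalgebra ℂ C(X, ℂ)) (h𝒜 : IsFunctionAlgebra 𝒜)
    (A : Set X) (hA : IsMaximalAntisymmetrySet 𝒜 A) :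
    ∃ 𝒮 : Set (Set X), (∀ E ∈ 𝒮, IsPeakSet 𝒜 E) ∧ A = ⋂₀ 𝒮 := by
  cases isEmpty_or_nonempty X
  · exact ⟨∅, fun _ h ↦ h.elim, Subsingleton.elim _ _⟩
  obtain ⟨a, ha⟩ := hA.nonempty
  obtain ⟨E, hE⟩ := exists_minimal_isGeneralizedPeakSet_superset (𝒜 := 𝒜) A
  have hE_anti := isAntisymmetrySet_of_minimal_isGeneralizedPeakSet h𝒜.1 hA.1 ha hE
  rw [← hA.2 E hE_anti hE.prop.2]
  exact hE.prop.1
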